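/- arXiv:1603.04915 — 2 statements merged into one kernel-verified Lean document; each statement's English description precedes it below -/
import Mathlib

section
/- Let X_τ be a τ/2-net of X and let V̇ : X → ℝ be L-Lipschitz. Suppose u : X → ℝ satisfies V̇(y) ≤ u(y) for all y ∈ X_τ and u(y) < -L·τ for all y ∈ S ∩ X_τ, where S ⊆ X is such that every x ∈ S has its closest net point [x]_τ also in S. Then V̇(x) < 0 for all x ∈ S. -/
/-- Let `Xτ` be a `τ/2`-net with closest-point map `p`, and `V̇`
`L`-Lipschitz. If `V̇ ≤ u` on `Xτ`, `u < -L·τ` on `S ∩ Xτ`, and every `x ∈ S`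
has `p x ∈ S`, then `V̇ < 0` on `S`. -/
theorem net_certifies_negativity
    {X : Type*} [MetricSpace X]
    (Xτ S : Set X) (p : X → X) (τ : ℝ) (hτ : 0 ≤ τ)
    (hp : ∀ x, p x ∈ Xτ ∧ dist x (p x) ≤ τ / 2)
    (Vdot u : X → ℝ) (L : ℝ) (hL : 0 ≤ L)
    (hlip : ∀ x y, |Vdot x - Vdot y| ≤ L * dist x y)
    (hub : ∀ y ∈ Xτ, Vdot y ≤ u y)
    (hS : ∀ x ∈ S, p x ∈ S)
    (hsafe : ∀ y ∈ S ∩ Xτ, u y < -L * τ) :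
    ∀ x ∈ S, Vdot x < 0 := by
  intro x hx
  obtain ⟨hmem, hdist⟩ := hp x
  have h1 : Vdot x - Vdot (p x) ≤ L * dist x (p x) :=
    (abs_le.mp (hlip x (p x))).2
  have h2 : Vdot (p x) ≤ u (p x) := hub _ hmem
  have h3 : u (p x) < -L * τ := hsafe _ ⟨hS x hx, hmem⟩
  have h4 : L * dist x (p x) ≤ L * (τ / 2) :=
    mul_le_mul_of_nonneg_left hdist hL
  nlinarith
end

section
/- If h : X → ℝ is L-Lipschitz, S₀ ⊆ {x | h(x) < -L·τ}, and R_l(S) ⊆ S for all S, then every iterate of the operator R_0 (with ε = 0) applied to S₀ is contained in {x ∈ X | h(x) < -L·τ}: for all i, R_0^i(S₀) ⊆ {x | h(x) < -L·τ}. -/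
/-- The baseline exploration operator
`R_ε(S) = S ∪ {x ∈ Xτ | ∃ x' ∈ R_l(S), h(x') + ε + L·dist(x,x') < -L·τ}`. -/
def Rop {X : Type*} [MetricSpace X] (Xτ : Set X) (h : X → ℝ) (L τ : ℝ)
    (Rl : Set X → Set X) (ε : ℝ) (S : Set X) : Set X :=
  S ∪ {x | x ∈ Xτ ∧ ∃ x' ∈ Rl S, h x' + ε + L * dist x x' < -L * τ}

/-- If `h` is `L`-Lipschitz, `S₀ ⊆ {x | h x < -L·τ}`, and
`R_l(S) ⊆ S` for all `S`, then every iterate of `R_0` starting from `S₀`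
is contained in `{x | h x < -L·τ}`. -/
theorem baseline_operator_sound
    {X : Type*} [MetricSpace X] (Xτ : Set X) (h : X → ℝ) (L τ : ℝ)
    (hL : 0 ≤ L) (hτ : 0 ≤ τ)
    (hlip : ∀ x y, |h x - h y| ≤ L * dist x y)
    (Rl : Set X → Set X) (hRl : ∀ S : Set X, Rl S ⊆ S)
    (S₀ : Set X) (hS₀ : S₀ ⊆ {x | h x < -L * τ}) :
    ∀ i : ℕ, (Rop Xτ h L τ Rl 0)^[i] S₀ ⊆ {x | h x < -L * τ} := by
  intro i
  induction i with
  | zero => simpa using hS₀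
  | succ n ih =>
    rw [Function.iterate_succ_apply']
    rintro x (hx | ⟨-, x', hx', hlt⟩)
    · exact ih hx
    · have h1 : h x - h x' ≤ L * dist x x' := (abs_le.mp (hlip x x')).2
      have : h x ≤ h x' + 0 + L * dist x x' := by linarith
      exact lt_of_le_of_lt this hlt
end
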